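/- arXiv:2310.02979 — 5 statements merged into one kernel-verified Lean document; each statement's English description precedes it below -/
import Mathlib

section
/- If P is a path and L is a list assignment giving each vertex of P exactly 2 colors, then there exists a set Φ of exactly two proper L-colorings of P such that for each vertex v of P and each color c ∈ L(v), exactly one coloring φ ∈ Φ satisfies φ(v) = c. -/
/-- Auxiliary: from a 2-element set and excluded values x ≠ y, we can pick the two
elements as an ordered pair (p.1, p.2) with p.1 ≠ x and p.2 ≠ y. -/
lemma stmt3_pair (s : Finset ℕ) (hs : s.card = 2) (x y : ℕ) (hxy : x ≠ y) :
    ∃ p : ℕ × ℕ, p.1 ∈ s ∧ p.2 ∈ s ∧ p.1 ≠ p.2 ∧ p.1 ≠ x ∧ p.2 ≠ y := by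
  obtain ⟨a, b, hab, rfl⟩ := Finset.card_eq_two.mp hs
  by_cases h : a = x ∨ b = y
  · refine ⟨(b, a), by simp, by simp, hab.symm, ?_, ?_⟩
    · rcases h with rfl | rfl
      · exact fun hb => hab hb.symm
      · exact fun hb => hxy hb.symm
    · rcases h with rfl | rfl
      · exact hxy
      · exact hab
  · push_neg at h
    exact ⟨(a, b), by simp, by simp, hab, h.1, h.2⟩

/-- If `P` is a path (on `n ≥ 1` vertices) and `L` gives each vertex exactly 2 colors,
then there is a set `Φ` of exactly two proper `L`-colorings of `P` such that for each
vertex `v` and each color `c ∈ L(v)`, exactly one coloring `φ ∈ Φ` satisfies `φ(v) = c`. -/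
theorem stmt3 (n : ℕ) (hn : 1 ≤ n) (L : Fin n → Finset ℕ) (hL : ∀ v, (L v).card = 2) :
    ∃ Φ : Finset (Fin n → ℕ), Φ.card = 2 ∧
      (∀ φ ∈ Φ, (∀ v, φ v ∈ L v) ∧
        ∀ u v, (SimpleGraph.pathGraph n).Adj u v → φ u ≠ φ v) ∧
      ∀ v : Fin n, ∀ c ∈ L v, (Φ.filter (fun φ => φ v = c)).card = 1 := by
  classical
  set L' : ℕ → Finset ℕ := fun k => if h : k < n then L ⟨k, h⟩ else {0, 1} with hL'def
  have hL'card : ∀ k, (L' k).card = 2 := by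
    intro k
    simp only [L']
    split
    · exact hL _
    · decide
  have h0 : ∃ p : ℕ × ℕ, p.1 ∈ L' 0 ∧ p.2 ∈ L' 0 ∧ p.1 ≠ p.2 := by
    obtain ⟨a, b, hab, hs⟩ := Finset.card_eq_two.mp (hL'card 0)
    exact ⟨(a, b), by simp [hs], by simp [hs], hab⟩
  set step : ℕ × ℕ → Finset ℕ → ℕ × ℕ := fun prev s =>
    if h : ∃ p : ℕ × ℕ, p.1 ∈ s ∧ p.2 ∈ s ∧ p.1 ≠ p.2 ∧ p.1 ≠ prev.1 ∧ p.2 ≠ prev.2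
    then h.choose else (0, 0) with hstepdef
  set g : ℕ → ℕ × ℕ := fun k => Nat.rec h0.choose (fun k ih => step ih (L' (k + 1))) k
    with hgdef
  have hg0 : (g 0).1 ∈ L' 0 ∧ (g 0).2 ∈ L' 0 ∧ (g 0).1 ≠ (g 0).2 := h0.choose_spec
  have hgsucc : ∀ k, g (k + 1) = step (g k) (L' (k + 1)) := fun k => rfl
  -- invariant
  have hinv : ∀ k, (g k).1 ∈ L' k ∧ (g k).2 ∈ L' k ∧ (g k).1 ≠ (g k).2 ∧
      (k = 0 ∨ ((g k).1 ≠ (g (k - 1)).1 ∧ (g k).2 ≠ (g (k - 1)).2)) := by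
    intro k
    induction k with
    | zero => exact ⟨hg0.1, hg0.2.1, hg0.2.2, Or.inl rfl⟩
    | succ k ih =>
      have hex := stmt3_pair (L' (k + 1)) (hL'card (k + 1)) (g k).1 (g k).2 ih.2.2.1
      have : g (k + 1) = hex.choose := by
        rw [hgsucc, hstepdef]
        simp only [dif_pos hex]
      obtain ⟨h1, h2, h3, h4, h5⟩ := hex.choose_spec
      rw [← this] at h1 h2 h3 h4 h5
      exact ⟨h1, h2, h3, Or.inr ⟨by simpa using h4, by simpa using h5⟩⟩
  have hne : ∀ k, (g (k + 1)).1 ≠ (g k).1 ∧ (g (k + 1)).2 ≠ (g k).2 := by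
    intro k
    rcases (hinv (k + 1)).2.2.2 with h | h
    · omega
    · simpa using h
  set φ₀ : Fin n → ℕ := fun v => (g v.val).1 with hφ₀
  set φ₁ : Fin n → ℕ := fun v => (g v.val).2 with hφ₁
  have hLeq : ∀ v : Fin n, L' v.val = L v := by
    intro v; simp [L', v.isLt]
  have hmem₀ : ∀ v, φ₀ v ∈ L v := fun v => hLeq v ▸ (hinv v.val).1
  have hmem₁ : ∀ v, φ₁ v ∈ L v := fun v => hLeq v ▸ (hinv v.val).2.1
  have hdist : ∀ v : Fin n, φ₀ v ≠ φ₁ v := fun v => (hinv v.val).2.2.1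
  have hφne : φ₀ ≠ φ₁ := by
    intro h
    exact hdist ⟨0, hn⟩ (congrFun h ⟨0, hn⟩)
  refine ⟨{φ₀, φ₁}, ?_, ?_, ?_⟩
  · rw [Finset.card_pair hφne]
  · intro φ hφ
    have hadj : ∀ u v : Fin n, (SimpleGraph.pathGraph n).Adj u v →
        (u.val + 1 = v.val ∨ v.val + 1 = u.val) := by
      intro u v h
      rw [SimpleGraph.pathGraph_adj] at h
      exact h
    rcases Finset.mem_insert.mp hφ with rfl | hφ
    · refine ⟨hmem₀, fun u v h => ?_⟩
      simp only [hφ₀]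
      rcases hadj u v h with h' | h'
      · have := (hne u.val).1
        rw [h'] at this
        exact fun he => this he.symm
      · have := (hne v.val).1
        rw [h'] at this
        exact this
    · rw [Finset.mem_singleton] at hφ
      subst hφ
      refine ⟨hmem₁, fun u v h => ?_⟩
      simp only [hφ₁]
      rcases hadj u v h with h' | h'
      · have := (hne u.val).2
        rw [h'] at this
        exact fun he => this he.symm
      · have := (hne v.val).2
        rw [h'] at this
        exact this
  · intro v c hc
    have hLv : L v = {φ₀ v, φ₁ v} := by
      refine (Finset.eq_of_subset_of_card_le ?_ ?_).symm
      · intro x hx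
        rcases Finset.mem_insert.mp hx with rfl | hx
        · exact hmem₀ v
        · rw [Finset.mem_singleton] at hx; exact hx ▸ hmem₁ v
      · rw [hL v, Finset.card_pair (hdist v)]
    rw [hLv] at hc
    rcases Finset.mem_insert.mp hc with rfl | hc
    · rw [Finset.filter_insert, if_pos rfl, Finset.filter_singleton,
        if_neg (hdist v).symm]
      simp
    · rw [Finset.mem_singleton] at hc
      subst hc
      rw [Finset.filter_insert, if_neg (hdist v), Finset.filter_singleton, if_pos rfl]
      simp
end

section
/- Let P be a path and let f : V(P) → {2,3}. For every f-assignment L on P there exists a probability distribution on proper L-colorings φ of P such that for every vertex v and every color c ∈ L(v), Pr(φ(v) = c) ≥ 1/3. -/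
set_option linter.unreachableTactic false
set_option linter.unusedTactic false


private theorem d2' : ∀ t : Fin 3 → Fin 3, (¬ ∃ j : Fin 2, ∀ i, t i = j.castSucc) →
    ∃ σ : Fin 3 → Fin 2, Function.Surjective σ ∧ ∀ i, (σ i).castSucc ≠ t i := by decide

private theorem d3' : ∀ t : Fin 3 → Fin 4, (¬ ∃ j : Fin 3, ∀ i, t i = j.castSucc) →
    ∃ σ : Fin 3 → Fin 3, Function.Surjective σ ∧ ∀ i, (σ i).castSucc ≠ t i := by decide

private def Pp (S : Finset ℕ) (h : Fin 3 → ℕ) : Prop :=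
  (∀ i, h i ∈ S) ∧ (∀ c ∈ S, ∃ i, h i = c)

private theorem key (S : Finset ℕ) (hS : S.card = 2 ∨ S.card = 3) (g : Fin 3 → ℕ)
    (hg : ¬ ∀ i j : Fin 3, g i = g j) :
    ∃ h : Fin 3 → ℕ, Pp S h ∧ ∀ i, h i ≠ g i := by
  rcases hS with hS | hS
  · obtain ⟨a, b, hab, rfl⟩ := Finset.card_eq_two.mp hS
    let t : Fin 3 → Fin 3 := fun i => if g i = a then 0 else if g i = b then 1 else 2
    obtain ⟨σ, hσs, hσ⟩ := d2' t (by
      rintro ⟨j, hj⟩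
      apply hg
      have hc : ∃ x, ∀ i, g i = x := by
        by_cases h0 : j = 0
        · refine ⟨a, fun i => ?_⟩
          have hji := hj i; rw [h0] at hji
          by_contra hne
          simp only [t, if_neg hne] at hji
          split_ifs at hji <;> exact absurd hji (by decide)
        · have h1 : j = 1 := by omega
          refine ⟨b, fun i => ?_⟩
          have hji := hj i; rw [h1] at hji
          by_contra hne
          simp only [t] at hji
          split_ifs at hji <;> first | exact absurd hji (by decide) | tauto
      obtain ⟨x, hx⟩ := hc
      intro i j'; rw [hx i, hx j'])
    refine ⟨fun i => if σ i = 0 then a else b, ⟨?_, ?_⟩, ?_⟩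
    · intro i; dsimp only; split_ifs <;> simp
    · intro c hc
      simp only [Finset.mem_insert, Finset.mem_singleton] at hc
      rcases hc with rfl | rfl
      · obtain ⟨i, hi⟩ := hσs 0; exact ⟨i, by simp [hi]⟩
      · obtain ⟨i, hi⟩ := hσs 1; exact ⟨i, by simp [hi]⟩
    · intro i hi
      dsimp only at hi
      apply hσ i
      by_cases h0 : σ i = 0
      · have hgi : g i = a := by rw [← hi, h0]; simp
        rw [h0]
        simp only [t, if_pos hgi]
        rfl
      · have h1 : σ i = 1 := by omega
        have hgi : g i = b := by rw [← hi, h1]; simp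
        have hga : g i ≠ a := by rw [hgi]; exact fun h => hab h.symm
        rw [h1]
        simp only [t, if_neg hga, if_pos hgi]
        rfl
  · obtain ⟨a, b, c, hab, hac, hbc, rfl⟩ := Finset.card_eq_three.mp hS
    let t : Fin 3 → Fin 4 := fun i => if g i = a then 0 else if g i = b then 1 else
      if g i = c then 2 else 3
    obtain ⟨σ, hσs, hσ⟩ := d3' t (by
      rintro ⟨j, hj⟩
      apply hg
      have hc : ∃ x, ∀ i, g i = x := by
        by_cases h0 : j = 0
        · refine ⟨a, fun i => ?_⟩
          have hji := hj i; rw [h0] at hji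
          by_contra hne
          simp only [t, if_neg hne] at hji
          split_ifs at hji <;> exact absurd hji (by decide)
        · by_cases h1 : j = 1
          · refine ⟨b, fun i => ?_⟩
            have hji := hj i; rw [h1] at hji
            by_contra hne
            simp only [t] at hji
            split_ifs at hji <;> first | exact absurd hji (by decide) | tauto
          · have h2 : j = 2 := by omega
            refine ⟨c, fun i => ?_⟩
            have hji := hj i; rw [h2] at hji
            by_contra hne
            simp only [t] at hji
            split_ifs at hji <;> first | exact absurd hji (by decide) | tauto
      obtain ⟨x, hx⟩ := hc
      intro i j'; rw [hx i, hx j'])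
    refine ⟨fun i => if σ i = 0 then a else if σ i = 1 then b else c, ⟨?_, ?_⟩, ?_⟩
    · intro i; dsimp only; split_ifs <;> simp
    · intro d hd
      simp only [Finset.mem_insert, Finset.mem_singleton] at hd
      rcases hd with rfl | rfl | rfl
      · obtain ⟨i, hi⟩ := hσs 0; exact ⟨i, by simp [hi]⟩
      · obtain ⟨i, hi⟩ := hσs 1; exact ⟨i, by simp [hi]⟩
      · obtain ⟨i, hi⟩ := hσs 2; exact ⟨i, by simp [hi]⟩
    · intro i hi
      dsimp only at hi
      apply hσ i
      by_cases h0 : σ i = 0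
      · have hgi : g i = a := by rw [← hi, h0]; simp
        rw [h0]
        simp only [t, if_pos hgi]
        rfl
      · by_cases h1 : σ i = 1
        · have hgi : g i = b := by rw [← hi, h1]; simp
          have hga : g i ≠ a := by rw [hgi]; exact fun h => hab h.symm
          rw [h1]
          simp only [t, if_neg hga, if_pos hgi]
          rfl
        · have h2 : σ i = 2 := by omega
          have hgi : g i = c := by rw [← hi, h2]; simp
          have hga : g i ≠ a := by rw [hgi]; exact fun h => hac h.symm
          have hgb : g i ≠ b := by rw [hgi]; exact fun h => hbc h.symm
          rw [h2]
          simp only [t, if_neg hga, if_neg hgb, if_pos hgi]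
          rfl

private theorem Pp.nonconst {S : Finset ℕ} {h : Fin 3 → ℕ} (hS : 2 ≤ S.card) (hp : Pp S h) :
    ¬ ∀ i j : Fin 3, h i = h j := by
  intro hcon
  obtain ⟨a, ha, b, hb, hab⟩ := Finset.one_lt_card.mp hS
  obtain ⟨i, hi⟩ := hp.2 a ha
  obtain ⟨j, hj⟩ := hp.2 b hb
  exact hab (hi ▸ hj ▸ hcon i j)

private noncomputable def seq (L' : ℕ → Finset ℕ)
    (hc : ∀ m, (L' m).card = 2 ∨ (L' m).card = 3) :
    (m : ℕ) → {h : Fin 3 → ℕ // Pp (L' m) h}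
  | 0 => ⟨(key (L' 0) (hc 0) (fun i => i.1)
            (fun h => absurd (h 0 1) (by decide))).choose,
          (key (L' 0) (hc 0) (fun i => i.1)
            (fun h => absurd (h 0 1) (by decide))).choose_spec.1⟩
  | m + 1 =>
    ⟨(key (L' (m+1)) (hc (m+1)) (seq L' hc m).1
        (Pp.nonconst (by rcases hc m with h | h <;> omega) (seq L' hc m).2)).choose,
     (key (L' (m+1)) (hc (m+1)) (seq L' hc m).1
        (Pp.nonconst (by rcases hc m with h | h <;> omega) (seq L' hc m).2)).choose_spec.1⟩

private theorem seq_adj (L' : ℕ → Finset ℕ)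
    (hc : ∀ m, (L' m).card = 2 ∨ (L' m).card = 3) (m : ℕ) (i : Fin 3) :
    (seq L' hc (m+1)).1 i ≠ (seq L' hc m).1 i :=
  (key (L' (m+1)) (hc (m+1)) (seq L' hc m).1
        (Pp.nonconst (by rcases hc m with h | h <;> omega) (seq L' hc m).2)).choose_spec.2 i

open scoped ENNReal

/-- Let `P` be a path and `f : V(P) → {2,3}`. For every `f`-assignment `L` on `P` there
is a probability distribution on proper `L`-colorings `φ` of `P` such that for every
vertex `v` and color `c ∈ L(v)`, `Pr(φ(v) = c) ≥ 1/3`. -/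
theorem stmt4 (n : ℕ) (f : Fin n → ℕ) (hf : ∀ v, f v = 2 ∨ f v = 3)
    (L : Fin n → Finset ℕ) (hL : ∀ v, (L v).card = f v) :
    ∃ μ : PMF (Fin n → ℕ),
      (∀ φ ∈ μ.support, (∀ v, φ v ∈ L v) ∧
        ∀ u v, (SimpleGraph.pathGraph n).Adj u v → φ u ≠ φ v) ∧
      ∀ v : Fin n, ∀ c ∈ L v, (1/3 : ℝ≥0∞) ≤ μ.toOuterMeasure {φ | φ v = c} := by
  classical
  set L' : ℕ → Finset ℕ := fun m => if h : m < n then L ⟨m, h⟩ else {0, 1} with hL'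
  have hc : ∀ m, (L' m).card = 2 ∨ (L' m).card = 3 := by
    intro m
    by_cases h : m < n
    · simp only [hL', dif_pos h, hL]; exact hf _
    · left; simp [hL', dif_neg h]
  have hLeq : ∀ v : Fin n, L' v.1 = L v := by
    intro v; simp only [hL', dif_pos v.2]
  set F : Fin 3 → (Fin n → ℕ) := fun i v => (seq L' hc v.1).1 i with hF
  refine ⟨(PMF.uniformOfFintype (Fin 3)).map F, ?_, ?_⟩
  · intro φ hφ
    rw [PMF.support_map] at hφ
    obtain ⟨i, -, rfl⟩ := hφ
    constructor
    · intro v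
      have := (seq L' hc v.1).2.1 i
      rw [← hLeq v]
      exact this
    · intro u v huv hcon
      rw [SimpleGraph.pathGraph_adj] at huv
      simp only [hF] at hcon
      rcases huv with h | h
      · exact seq_adj L' hc u.1 i (by rw [h]; exact hcon.symm)
      · exact seq_adj L' hc v.1 i (by rw [h]; exact hcon)
  · intro v c hcv
    have hcl : c ∈ L' v.1 := by rw [hLeq v]; exact hcv
    obtain ⟨i, hi⟩ := (seq L' hc v.1).2.2 c hcl
    have h1 : F i ∈ {φ : Fin n → ℕ | φ v = c} := hi
    calc (1/3 : ℝ≥0∞) = (PMF.uniformOfFintype (Fin 3)) i := by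
            simp [PMF.uniformOfFintype_apply]
      _ ≤ ((PMF.uniformOfFintype (Fin 3)).map F) (F i) := by
            rw [PMF.map_apply]
            refine le_trans ?_ (ENNReal.le_tsum i)
            simp
      _ = ((PMF.uniformOfFintype (Fin 3)).map F).toOuterMeasure {F i} :=
            (PMF.toOuterMeasure_apply_singleton _ _).symm
      _ ≤ _ := ((PMF.uniformOfFintype (Fin 3)).map F).toOuterMeasure.mono
            (Set.singleton_subset_iff.mpr h1)
end

section
/- Let D be the diamond graph K₄ minus one edge. For every list assignment L on D with all lists of size 3, there exists a set Φ of six proper L-colorings of D such that for each vertex v and each color c ∈ L(v), exactly two colorings φ ∈ Φ satisfy φ(v) = c. In particular, choosing a coloring from Φ uniformly at random, each pair (v, c) with c ∈ L(v) is realized with probability exactly 1/3. -/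
open Finset Function

/-- The diamond graph: `K₄` minus the edge between vertices `2` and `3`. -/
def diamondGraph : SimpleGraph (Fin 4) :=
  SimpleGraph.fromEdgeSet {s(0, 1), s(0, 2), s(0, 3), s(1, 2), s(1, 3)}

/-- For a pair `(i,k)`, the "partner" index `i + k + 1`, one of the two indices `≠ i`. -/
def nbr (x : Fin 3 × Fin 2) : Fin 3 := x.1 + ⟨x.2.val + 1, by omega⟩

lemma nbr_ne (x : Fin 3 × Fin 2) : nbr x ≠ x.1 := by revert x; decide

lemma nbr_inj {x y : Fin 3 × Fin 2} (h1 : x.1 = y.1) (h2 : nbr x = nbr y) : x = y := by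
  revert x y; decide

lemma card_fst_eq (i0 : Fin 3) :
    (univ.filter (fun x : Fin 3 × Fin 2 => x.1 = i0)).card = 2 := by revert i0; decide

lemma card_nbr_eq (j0 : Fin 3) :
    (univ.filter (fun x : Fin 3 × Fin 2 => nbr x = j0)).card = 2 := by revert j0; decide

/-- Lemma A: given an enumeration `a` of `L0`, there is an enumeration `b` of `L1`
with `a i ≠ b j` for all `i ≠ j`. -/
lemma exists_pairing (L0 L1 : Finset ℕ) (h1 : L1.card = 3)
    (a : Fin 3 → ℕ) (ha : Injective a) (haim : image a univ = L0) :
    ∃ b : Fin 3 → ℕ, Injective b ∧ image b univ = L1 ∧ ∀ i j, i ≠ j → a i ≠ b j := by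
  classical
  set t : Fin 3 → Finset ℕ :=
    fun j => (L1 \ L0) ∪ (if a j ∈ L1 then {a j} else ∅) with ht
  have hall : ∀ s : Finset (Fin 3), s.card ≤ (s.biUnion t).card := by
    intro s
    rcases s.eq_empty_or_nonempty with rfl | ⟨x0, hx0⟩
    · simp
    set G := s.filter (fun j => a j ∈ L1) with hG
    have hsub : (L1 \ L0) ∪ (image a G) ⊆ s.biUnion t := by
      intro c hc
      rcases mem_union.mp hc with hc | hc
      · exact mem_biUnion.mpr ⟨x0, hx0, mem_union_left _ hc⟩
      · obtain ⟨j, hj, rfl⟩ := mem_image.mp hc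
        have hj1 := (mem_filter.mp hj).2
        exact mem_biUnion.mpr ⟨j, (mem_filter.mp hj).1,
          mem_union_right _ (by simp [hj1])⟩
    have hdisj : Disjoint (L1 \ L0) (image a G) := by
      rw [Finset.disjoint_right]
      intro c hc
      obtain ⟨j, _, rfl⟩ := mem_image.mp hc
      have : a j ∈ L0 := by rw [← haim]; exact mem_image_of_mem a (mem_univ j)
      simp [this]
    have hcard1 : (L1 \ L0).card + G.card ≤ (s.biUnion t).card := by
      have := Finset.card_le_card hsub
      rwa [Finset.card_union_of_disjoint hdisj,
        Finset.card_image_of_injective _ ha] at this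
    -- now bound s.card
    have hsplit : G.card + (s.filter (fun j => a j ∉ L1)).card = s.card :=
      Finset.card_filter_add_card_filter_not _
    have hbadle : (s.filter (fun j => a j ∉ L1)).card ≤ (L1 \ L0).card := by
      have h1' : (s.filter (fun j => a j ∉ L1)).card
          ≤ (univ.filter (fun j : Fin 3 => a j ∉ L1)).card :=
        Finset.card_le_card (Finset.filter_subset_filter _ (subset_univ s))
      have hGfull : (univ.filter (fun j : Fin 3 => a j ∈ L1)).card = (L0 ∩ L1).card := by
        have him : image a (univ.filter (fun j : Fin 3 => a j ∈ L1)) = L0 ∩ L1 := by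
          ext c
          simp only [Finset.mem_image, Finset.mem_filter, Finset.mem_univ, true_and,
            Finset.mem_inter]
          constructor
          · rintro ⟨j, hj, rfl⟩
            exact ⟨by rw [← haim]; exact mem_image_of_mem a (mem_univ j), hj⟩
          · rintro ⟨hc0, hc1⟩
            rw [← haim] at hc0
            obtain ⟨j, _, rfl⟩ := mem_image.mp hc0
            exact ⟨j, hc1, rfl⟩
        rw [← him, Finset.card_image_of_injective _ ha]
      have hcompl : (univ.filter (fun j : Fin 3 => a j ∉ L1)).card
          = 3 - (L0 ∩ L1).card := by
        have := Finset.card_filter_add_card_filter_not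
          (s := (univ : Finset (Fin 3))) (p := fun j => a j ∈ L1)
        simp only [Finset.card_univ, Fintype.card_fin] at this
        omega
      have hsd : (L1 \ L0).card = 3 - (L0 ∩ L1).card := by
        have h' := Finset.card_sdiff_add_card_inter L1 L0
        rw [Finset.inter_comm] at h'
        omega
      omega
    omega
  obtain ⟨b, hbinj, hbt⟩ := (Finset.all_card_le_biUnion_card_iff_exists_injective t).mp hall
  have hbL1 : ∀ j, b j ∈ L1 := by
    intro j
    have := hbt j
    rcases mem_union.mp this with h | h
    · exact (mem_sdiff.mp h).1
    · by_cases hc : a j ∈ L1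
      · rw [if_pos hc, Finset.mem_singleton] at h
        rw [h]; exact hc
      · rw [if_neg hc] at h
        exact absurd h (Finset.notMem_empty _)
  have hbim : image b univ = L1 := by
    apply Finset.eq_of_subset_of_card_le
    · intro c hc; obtain ⟨j, _, rfl⟩ := mem_image.mp hc; exact hbL1 j
    · rw [Finset.card_image_of_injective _ hbinj]; simp [h1]
  refine ⟨b, hbinj, hbim, ?_⟩
  intro i j hij hcon
  have := hbt j
  rcases mem_union.mp this with h | h
  · have : b j ∉ L0 := (mem_sdiff.mp h).2
    apply this
    rw [← hcon, ← haim]; exact mem_image_of_mem a (mem_univ i)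
  · by_cases hc : a j ∈ L1
    · rw [if_pos hc, Finset.mem_singleton] at h
      exact hij (ha (hcon.trans h))
    · rw [if_neg hc] at h
      exact absurd h (Finset.notMem_empty _)

/-- The allowed third colors for the pair indexed by `x`. -/
def Npairs (a b : Fin 3 → ℕ) (C : Finset ℕ) (x : Fin 3 × Fin 2) : Finset ℕ :=
  C \ {a x.1, b (nbr x)}

lemma mem_Npairs {a b : Fin 3 → ℕ} {C : Finset ℕ} {x : Fin 3 × Fin 2} {c : ℕ} :
    c ∈ Npairs a b C x ↔ c ∈ C ∧ c ≠ a x.1 ∧ c ≠ b (nbr x) := by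
  simp [Npairs, not_or]

/-- Lemma B: a balanced choice of third colors avoiding the pair colors. -/
lemma hallB (a b : Fin 3 → ℕ) (ha : Injective a) (hb : Injective b)
    (C : Finset ℕ) (hC : C.card = 3) :
    ∃ g : Fin 3 × Fin 2 → ℕ,
      (∀ x, g x ∈ C ∧ g x ≠ a x.1 ∧ g x ≠ b (nbr x)) ∧
      ∀ c ∈ C, (univ.filter (fun x => g x = c)).card = 2 := by
  have hNsub : ∀ x, Npairs a b C x ⊆ C := fun x => Finset.sdiff_subset
  have hall : ∀ s : Finset (Fin 3 × Fin 2),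
      s.card ≤ (s.biUnion (fun x => (Npairs a b C x) ×ˢ (univ : Finset (Fin 2)))).card := by
    intro s
    have hbU : s.biUnion (fun x => (Npairs a b C x) ×ˢ (univ : Finset (Fin 2)))
        = (s.biUnion (Npairs a b C)) ×ˢ (univ : Finset (Fin 2)) := by
      ext y
      simp only [Finset.mem_biUnion, Finset.mem_product, Finset.mem_univ, and_true]
    rw [hbU, Finset.card_product]
    simp only [Finset.card_univ, Fintype.card_fin]
    rcases s.eq_empty_or_nonempty with rfl | ⟨x0, hx0⟩
    · simp
    have hn1 : 1 ≤ (s.biUnion (Npairs a b C)).card := by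
      have hne : (Npairs a b C x0).Nonempty := by
        rw [← Finset.card_pos, Npairs]
        have h2 : ({a x0.1, b (nbr x0)} : Finset ℕ).card ≤ 2 :=
          (Finset.card_insert_le _ _).trans (by simp)
        have h3 := Finset.le_card_sdiff ({a x0.1, b (nbr x0)} : Finset ℕ) C
        omega
      obtain ⟨c, hc⟩ := hne
      exact Finset.card_pos.mpr ⟨c, mem_biUnion.mpr ⟨x0, hx0, hc⟩⟩
    by_cases h3 : 3 ≤ (s.biUnion (Npairs a b C)).card
    · have : s.card ≤ 6 := by
        have := Finset.card_le_univ s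
        simpa using this
      omega
    -- a color not covered lies in every pair of s
    have hforced : ∀ c ∈ C, c ∉ s.biUnion (Npairs a b C) →
        ∀ x ∈ s, a x.1 = c ∨ b (nbr x) = c := by
      intro c hcC hcN x hx
      by_contra hcon
      push_neg at hcon
      exact hcN (mem_biUnion.mpr ⟨x, hx,
        mem_Npairs.mpr ⟨hcC, fun h => hcon.1 h.symm, fun h => hcon.2 h.symm⟩⟩)
    have hbsub : s.biUnion (Npairs a b C) ⊆ C := Finset.biUnion_subset.mpr fun x _ => hNsub x
    have hdiffcard : (C \ s.biUnion (Npairs a b C)).card = 3 - (s.biUnion (Npairs a b C)).card := by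
      rw [Finset.card_sdiff_of_subset hbsub, hC]
    by_cases h2 : (s.biUnion (Npairs a b C)).card = 2
    · -- one uncovered color c ; each x ∈ s has a x.1 = c or b (nbr x) = c
      obtain ⟨c, hc⟩ : (C \ s.biUnion (Npairs a b C)).Nonempty := by
        rw [← Finset.card_pos]; omega
      obtain ⟨hcC, hcN⟩ := Finset.mem_sdiff.mp hc
      have hforce := hforced c hcC hcN
      have hsubAB : s ⊆ (univ.filter (fun x : Fin 3 × Fin 2 => a x.1 = c)) ∪
          (univ.filter (fun x : Fin 3 × Fin 2 => b (nbr x) = c)) := by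
        intro x hx
        rcases hforce x hx with h | h
        · exact Finset.mem_union_left _ (mem_filter.mpr ⟨mem_univ _, h⟩)
        · exact Finset.mem_union_right _ (mem_filter.mpr ⟨mem_univ _, h⟩)
      have hA : (univ.filter (fun x : Fin 3 × Fin 2 => a x.1 = c)).card ≤ 2 := by
        rcases (univ.filter (fun x : Fin 3 × Fin 2 => a x.1 = c)).eq_empty_or_nonempty
          with he | ⟨x1, hx1⟩
        · simp [he]
        · have hx1' := (mem_filter.mp hx1).2
          have hsub2 : (univ.filter (fun x : Fin 3 × Fin 2 => a x.1 = c)) ⊆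
              (univ.filter (fun x : Fin 3 × Fin 2 => x.1 = x1.1)) := by
            intro y hy
            have hy' := (mem_filter.mp hy).2
            exact mem_filter.mpr ⟨mem_univ _, ha (hy'.trans hx1'.symm)⟩
          have := Finset.card_le_card hsub2
          rwa [card_fst_eq] at this
      have hB : (univ.filter (fun x : Fin 3 × Fin 2 => b (nbr x) = c)).card ≤ 2 := by
        rcases (univ.filter (fun x : Fin 3 × Fin 2 => b (nbr x) = c)).eq_empty_or_nonempty
          with he | ⟨x1, hx1⟩
        · simp [he]
        · have hx1' := (mem_filter.mp hx1).2
          have hsub2 : (univ.filter (fun x : Fin 3 × Fin 2 => b (nbr x) = c)) ⊆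
              (univ.filter (fun x : Fin 3 × Fin 2 => nbr x = nbr x1)) := by
            intro y hy
            have hy' := (mem_filter.mp hy).2
            exact mem_filter.mpr ⟨mem_univ _, hb (hy'.trans hx1'.symm)⟩
          have := Finset.card_le_card hsub2
          rwa [card_nbr_eq] at this
      have := (Finset.card_le_card hsubAB).trans (Finset.card_union_le _ _)
      omega
    · -- (s.biUnion N).card = 1 : two uncovered colors
      have h1' : (s.biUnion (Npairs a b C)).card = 1 := by omega
      have hcd : 1 < (C \ s.biUnion (Npairs a b C)).card := by omega
      obtain ⟨c, hc, d, hd, hcdne⟩ := Finset.one_lt_card.mp hcd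
      obtain ⟨hcC, hcN⟩ := Finset.mem_sdiff.mp hc
      obtain ⟨hdC, hdN⟩ := Finset.mem_sdiff.mp hd
      have hfc := hforced c hcC hcN
      have hfd := hforced d hdC hdN
      have hsubAB : s ⊆ (univ.filter (fun x : Fin 3 × Fin 2 => a x.1 = c ∧ b (nbr x) = d)) ∪
          (univ.filter (fun x : Fin 3 × Fin 2 => a x.1 = d ∧ b (nbr x) = c)) := by
        intro x hx
        rcases hfc x hx with h | h <;> rcases hfd x hx with h' | h'
        · exact absurd (h.symm.trans h') hcdne
        · exact Finset.mem_union_left _ (mem_filter.mpr ⟨mem_univ _, h, h'⟩)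
        · exact Finset.mem_union_right _ (mem_filter.mpr ⟨mem_univ _, h', h⟩)
        · exact absurd (h.symm.trans h') hcdne
      have key : ∀ u v : ℕ,
          (univ.filter (fun x : Fin 3 × Fin 2 => a x.1 = u ∧ b (nbr x) = v)).card ≤ 1 := by
        intro u v
        apply Finset.card_le_one.mpr
        intro x hx y hy
        obtain ⟨_, hx1, hx2⟩ := mem_filter.mp hx
        obtain ⟨_, hy1, hy2⟩ := mem_filter.mp hy
        exact nbr_inj (ha (hx1.trans hy1.symm)) (hb (hx2.trans hy2.symm))
      have := (Finset.card_le_card hsubAB).trans (Finset.card_union_le _ _)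
      have k1 := key c d
      have k2 := key d c
      omega
  obtain ⟨f, hfinj, hft⟩ := (Finset.all_card_le_biUnion_card_iff_exists_injective
    (fun x => (Npairs a b C x) ×ˢ (univ : Finset (Fin 2)))).mp hall
  refine ⟨fun x => (f x).1, ?_, ?_⟩
  · intro x
    have h1 := hft x
    simp only [Finset.mem_product, Finset.mem_univ, and_true] at h1
    have h2 := mem_Npairs.mp h1
    exact ⟨h2.1, h2.2.1, h2.2.2⟩
  · intro c hcC
    have hsubCU : ∀ x, f x ∈ C ×ˢ (univ : Finset (Fin 2)) := by
      intro x
      have h1 := hft x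
      simp only [Finset.mem_product, Finset.mem_univ, and_true] at h1 ⊢
      exact hNsub x h1
    have him : image f univ = C ×ˢ (univ : Finset (Fin 2)) := by
      apply Finset.eq_of_subset_of_card_le
      · intro y hy; obtain ⟨x, _, rfl⟩ := mem_image.mp hy; exact hsubCU x
      · rw [Finset.card_image_of_injective _ hfinj, Finset.card_product, hC]
        simp
    have hfilter : (univ.filter (fun x => (f x).1 = c)).card
        = ((C ×ˢ (univ : Finset (Fin 2))).filter (fun y => y.1 = c)).card := by
      rw [← him, Finset.filter_image, Finset.card_image_of_injective _ hfinj]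
    rw [hfilter]
    have heq : (C ×ˢ (univ : Finset (Fin 2))).filter (fun y => y.1 = c)
        = {c} ×ˢ (univ : Finset (Fin 2)) := by
      ext y
      simp only [Finset.mem_filter, Finset.mem_product, Finset.mem_univ, and_true,
        Finset.mem_singleton]
      constructor
      · rintro ⟨_, h⟩; exact h
      · rintro rfl; exact ⟨hcC, rfl⟩
    rw [heq, Finset.card_product]
    simp

/-- For every list assignment `L` on the diamond with all lists of size `3`, there is a
set `Φ` of six proper `L`-colorings such that for each vertex `v` and color `c ∈ L(v)`,
exactly two colorings `φ ∈ Φ` satisfy `φ(v) = c`.  (In particular, drawing uniformly from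
`Φ`, each pair `(v, c)` is realized with probability exactly `1/3`.) -/
theorem stmt6 (L : Fin 4 → Finset ℕ) (hL : ∀ v, (L v).card = 3) :
    ∃ Φ : Finset (Fin 4 → ℕ), Φ.card = 6 ∧
      (∀ φ ∈ Φ, (∀ v, φ v ∈ L v) ∧ ∀ u v, diamondGraph.Adj u v → φ u ≠ φ v) ∧
      ∀ v : Fin 4, ∀ c ∈ L v, (Φ.filter (fun φ => φ v = c)).card = 2 := by
  obtain ⟨x, y, z, hxy, hxz, hyz, hL0⟩ := Finset.card_eq_three.mp (hL 0)
  have ha : Injective (![x, y, z] : Fin 3 → ℕ) := by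
    intro i j h
    fin_cases i <;> fin_cases j <;> simp_all
  have haim : image (![x, y, z] : Fin 3 → ℕ) univ = L 0 := by
    rw [hL0, show (univ : Finset (Fin 3)) = {0, 1, 2} from rfl,
      Finset.image_insert, Finset.image_insert, Finset.image_singleton]
    rfl
  obtain ⟨b, hb, hbim, hab⟩ := exists_pairing (L 0) (L 1) (hL 1) ![x, y, z] ha haim
  obtain ⟨g2, hg2, hg2c⟩ := hallB ![x, y, z] b ha hb (L 2) (hL 2)
  obtain ⟨g3, hg3, hg3c⟩ := hallB ![x, y, z] b ha hb (L 3) (hL 3)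
  set a : Fin 3 → ℕ := ![x, y, z]
  set F : Fin 3 × Fin 2 → (Fin 4 → ℕ) := fun p => ![a p.1, b (nbr p), g2 p, g3 p] with hF
  have hF0 : ∀ p, F p 0 = a p.1 := fun p => rfl
  have hF1 : ∀ p, F p 1 = b (nbr p) := fun p => rfl
  have hF2 : ∀ p, F p 2 = g2 p := fun p => rfl
  have hF3 : ∀ p, F p 3 = g3 p := fun p => rfl
  have hFinj : Injective F := by
    intro p q h
    have h0 : a p.1 = a q.1 := by rw [← hF0 p, ← hF0 q, h]
    have h1 : b (nbr p) = b (nbr q) := by rw [← hF1 p, ← hF1 q, h]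
    exact nbr_inj (ha h0) (hb h1)
  refine ⟨image F univ, ?_, ?_, ?_⟩
  · rw [Finset.card_image_of_injective _ hFinj]
    simp
  · intro φ hφ
    obtain ⟨p, _, rfl⟩ := mem_image.mp hφ
    constructor
    · intro v
      fin_cases v
      · show a p.1 ∈ L 0
        rw [← haim]; exact mem_image_of_mem a (mem_univ p.1)
      · show b (nbr p) ∈ L 1
        rw [← hbim]; exact mem_image_of_mem b (mem_univ (nbr p))
      · show g2 p ∈ L 2
        exact (hg2 p).1
      · show g3 p ∈ L 3
        exact (hg3 p).1
    · intro u v hadj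
      rw [diamondGraph, SimpleGraph.fromEdgeSet_adj] at hadj
      obtain ⟨hmem, hne⟩ := hadj
      have h01 : F p 0 ≠ F p 1 := by
        rw [hF0, hF1]
        exact hab p.1 (nbr p) (Ne.symm (nbr_ne p))
      have h02 : F p 0 ≠ F p 2 := by rw [hF0, hF2]; exact fun h => (hg2 p).2.1 h.symm
      have h03 : F p 0 ≠ F p 3 := by rw [hF0, hF3]; exact fun h => (hg3 p).2.1 h.symm
      have h12 : F p 1 ≠ F p 2 := by rw [hF1, hF2]; exact fun h => (hg2 p).2.2 h.symm
      have h13 : F p 1 ≠ F p 3 := by rw [hF1, hF3]; exact fun h => (hg3 p).2.2 h.symm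
      simp only [Set.mem_insert_iff, Set.mem_singleton_iff] at hmem
      rcases hmem with h | h | h | h | h <;>
        rcases Sym2.eq_iff.mp h with ⟨rfl, rfl⟩ | ⟨rfl, rfl⟩ <;>
        first
          | exact h01 | exact Ne.symm h01
          | exact h02 | exact Ne.symm h02
          | exact h03 | exact Ne.symm h03
          | exact h12 | exact Ne.symm h12
          | exact h13 | exact Ne.symm h13
  · intro v c hc
    have hfilt : ∀ (pred : (Fin 4 → ℕ) → Prop) [DecidablePred pred],
        ((image F univ).filter pred).card = (univ.filter (fun p => pred (F p))).card := by
      intro pred _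
      rw [Finset.filter_image, Finset.card_image_of_injective _ hFinj]
    fin_cases v
    · rw [hfilt]
      have hc' : c ∈ L 0 := hc
      rw [← haim] at hc'
      obtain ⟨i0, _, hi0⟩ := mem_image.mp hc'
      show (univ.filter (fun p : Fin 3 × Fin 2 => a p.1 = c)).card = 2
      have : (univ.filter (fun p : Fin 3 × Fin 2 => a p.1 = c))
          = univ.filter (fun p : Fin 3 × Fin 2 => p.1 = i0) := by
        apply Finset.filter_congr
        intro p _
        rw [← hi0]
        exact ⟨fun h => ha h, fun h => by rw [h]⟩
      rw [this, card_fst_eq]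
    · rw [hfilt]
      have hc' : c ∈ L 1 := hc
      rw [← hbim] at hc'
      obtain ⟨j0, _, hj0⟩ := mem_image.mp hc'
      show (univ.filter (fun p : Fin 3 × Fin 2 => b (nbr p) = c)).card = 2
      have : (univ.filter (fun p : Fin 3 × Fin 2 => b (nbr p) = c))
          = univ.filter (fun p : Fin 3 × Fin 2 => nbr p = j0) := by
        apply Finset.filter_congr
        intro p _
        rw [← hj0]
        exact ⟨fun h => hb h, fun h => by rw [h]⟩
      rw [this, card_nbr_eq]
    · rw [hfilt]
      show (univ.filter (fun p : Fin 3 × Fin 2 => g2 p = c)).card = 2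
      exact hg2c c hc
    · rw [hfilt]
      show (univ.filter (fun p : Fin 3 × Fin 2 => g3 p = c)).card = 2
      exact hg3c c hc
end

section
/- Let G be a connected graph and L a list assignment with |L(v)| = deg(v) for every vertex v. If G contains an induced even cycle, then G has a proper L-coloring. -/
/-!
Colour the vertices outside the induced even cycle `C` first, greedily, in order of decreasing
distance from a fixed vertex of `C`: when a vertex `v` is coloured, its neighbour one step closer
is still uncoloured, so fewer than `deg v` of its colours are blocked. Since `C` is induced, a
vertex of `C` has exactly `deg v - 2` neighbours off `C`, so at least two colours of its list
survive. Even cycles are `2`-choosable: if all lists are equal, alternate two of their colours;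
otherwise some colour `c` lies in the list of a vertex but not in that of its predecessor, and
colouring greedily around the cycle starting with `c` at that vertex never gets stuck.
-/

open Finset

namespace SimpleGraph

variable {V W α β : Type*}

def IsListColoringOn (G : SimpleGraph V) (L : V → Finset α) (S : Set V) (φ : V → α) : Prop :=
  (∀ v ∈ S, φ v ∈ L v) ∧ ∀ u ∈ S, ∀ v ∈ S, G.Adj u v → φ u ≠ φ v

theorem exists_isListColoringOn_of_card_lt [DecidableEq V] [DecidableEq α] [Nonempty α]
    [LinearOrder β] (G : SimpleGraph V) [DecidableRel G.Adj] (S : Finset V) (L : V → Finset α)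
    (d : V → β) (h : ∀ v ∈ S, #{u ∈ S | G.Adj v u ∧ d v ≤ d u} < #(L v)) :
    ∃ φ, G.IsListColoringOn L S φ := by
  suffices ∀ T ⊆ S, ∃ φ, G.IsListColoringOn L T φ from this S subset_rfl
  intro T
  induction T using Finset.induction_on_min_value d with
  | empty => exact fun _ => ⟨fun _ => Classical.arbitrary α, by simp [IsListColoringOn]⟩
  | insert a T _ hmin ih =>
    intro hTS
    obtain ⟨φ, hφL, hφ⟩ := ih ((subset_insert a T).trans hTS)
    have hcard : #({u ∈ T | G.Adj a u}.image φ) < #(L a) := calc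
      _ ≤ #{u ∈ T | G.Adj a u} := card_image_le
      _ ≤ #{u ∈ S | G.Adj a u ∧ d a ≤ d u} :=
        card_le_card fun u hu => by
          simp only [mem_filter] at hu ⊢
          exact ⟨hTS (mem_insert_of_mem hu.1), hu.2, hmin u hu.1⟩
      _ < #(L a) := h a (hTS (mem_insert_self a T))
    obtain ⟨c, hcL, hc⟩ := exists_mem_notMem_of_card_lt_card hcard
    have hfree : ∀ u ∈ T, G.Adj a u → c ≠ φ u := fun u hu hau hcu =>
      hc (mem_image.2 ⟨u, mem_filter.2 ⟨hu, hau⟩, hcu.symm⟩)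
    refine ⟨Function.update φ a c, ?_, ?_⟩
    · intro v hv
      rcases eq_or_ne v a with rfl | hva
      · simpa using hcL
      · simpa [hva] using hφL v (by simpa [hva] using hv)
    · intro u hu v hv huv
      simp only [coe_insert, Set.mem_insert_iff, mem_coe] at hu hv
      by_cases hua : u = a <;> by_cases hva : v = a
      · exact (huv.ne (hua.trans hva.symm)).elim
      · subst hua
        simpa [hva] using hfree v (hv.resolve_left hva) huv
      · subst hva
        simpa [hua] using (hfree u (hu.resolve_left hua) huv.symm).symm
      · simpa [hua, hva] using hφ u (hu.resolve_left hua) v (hv.resolve_left hva) huv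

theorem Connected.exists_adj_dist_lt {G : SimpleGraph V} (hG : G.Connected) {c v : V}
    (hv : v ≠ c) : ∃ w, G.Adj v w ∧ G.dist c w < G.dist c v := by
  obtain ⟨p, hp⟩ := hG.exists_walk_length_eq_dist v c
  cases p with
  | nil => exact absurd rfl hv
  | @cons _ w _ hvw q =>
    refine ⟨w, hvw, ?_⟩
    rw [Walk.length_cons] at hp
    rw [dist_comm, dist_comm (u := c), ← hp]
    exact Nat.lt_succ_of_le (dist_le q)

theorem Connected.exists_isListColoringOn_of_notMem [Fintype V] [Nonempty α]
    {G : SimpleGraph V} [DecidableRel G.Adj] (hG : G.Connected) (L : V → Finset α) {S : Set V}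
    {c : V} (hc : c ∉ S) (hL : ∀ v ∈ S, G.degree v ≤ #(L v)) :
    ∃ φ, G.IsListColoringOn L S φ := by
  classical
  simpa using G.exists_isListColoringOn_of_card_lt S.toFinset L (G.dist c) fun v hv => by
    rw [Set.mem_toFinset] at hv
    obtain ⟨w, hvw, hw⟩ := hG.exists_adj_dist_lt (ne_of_mem_of_not_mem hv hc)
    calc #{u ∈ S.toFinset | G.Adj v u ∧ G.dist c v ≤ G.dist c u}
        ≤ #((G.neighborFinset v).erase w) := card_le_card fun u hu => by
          simp only [mem_filter, mem_erase, mem_neighborFinset] at hu ⊢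
          exact ⟨by rintro rfl; omega, hu.2.1⟩
      _ < G.degree v := card_erase_lt_of_mem ((mem_neighborFinset _ _ _).2 hvw)
      _ ≤ #(L v) := hL v hv

theorem cycleGraph_exists_isListColoringOn_of_mem {m : ℕ} (hm : Even m) {M : Fin m → Finset α}
    {a b : α} (hab : a ≠ b) (ha : ∀ i, a ∈ M i) (hb : ∀ i, b ∈ M i) :
    ∃ ρ, (cycleGraph m).IsListColoringOn M Set.univ ρ := by
  have C := cycleGraph.bicoloring_of_even m hm
  refine ⟨fun i => if C i then a else b, fun i _ => ?_, fun u _ v _ huv => ?_⟩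
  · dsimp only
    split_ifs
    exacts [ha i, hb i]
  · have := C.valid huv
    dsimp only
    split_ifs <;> simp_all [hab.symm]

theorem cycleGraph_exists_isListColoringOn_of_notMem [DecidableEq α] {n : ℕ}
    {M : Fin (n + 2) → Finset α} (hM : ∀ i, 2 ≤ #(M i)) {c : α} (hc₀ : c ∈ M 0)
    (hc : c ∉ M (Fin.last _)) :
    ∃ ρ, (cycleGraph (n + 2)).IsListColoringOn M Set.univ ρ := by
  have : Nonempty α := ⟨c⟩
  have hadj : ∀ v u, (cycleGraph (n + 2)).Adj v u → u ≤ v →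
      u = v - 1 ∨ v = Fin.last _ ∧ u = 0 := by
    intro v u hvu huv
    rcases cycleGraph_adj.1 hvu with h | h
    · exact Or.inl (eq_sub_of_add_eq (sub_eq_iff_eq_add'.1 h).symm)
    · obtain rfl : u = v + 1 := sub_eq_iff_eq_add'.1 h
      rcases eq_or_ne v (Fin.last _) with rfl | hv
      · exact Or.inr ⟨rfl, Fin.last_add_one _⟩
      · rw [Fin.le_iff_val_le_val, Fin.val_add_one_of_lt (Fin.lt_last_iff_ne_last.2 hv)] at huv
        omega
  -- `0` is forced to colour `c`, so adding `c` to the list of its neighbour `Fin.last _`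
  -- gives that vertex an extra colour without allowing a new choice.
  set L : Fin (n + 2) → Finset α := fun k =>
    if k = 0 then {c} else if k = Fin.last _ then insert c (M k) else M k with hL
  obtain ⟨ρ, hρL, hρ⟩ := (cycleGraph (n + 2)).exists_isListColoringOn_of_card_lt univ L
    OrderDual.toDual fun v _ => by
      simp only [OrderDual.toDual_le_toDual]
      by_cases hv0 : v = 0
      · subst hv0
        simpa [hL] using fun u h => h.ne'
      by_cases hvl : v = Fin.last _
      · have hc' : #(L v) = #(M v) + 1 := by simp [hL, hvl, card_insert_of_notMem, hc]
        calc _ ≤ #({v - 1, 0} : Finset _) := card_le_card fun u hu => by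
              simp only [mem_filter, mem_univ, true_and] at hu
              rcases hadj v u hu.1 hu.2 with h | h <;> simp [h]
          _ ≤ 2 := card_le_two
          _ < #(L v) := by have := hM v; omega
      · calc _ ≤ #({v - 1} : Finset _) := card_le_card fun u hu => by
              simp only [mem_filter, mem_univ, true_and] at hu
              rcases hadj v u hu.1 hu.2 with h | h
              · simp [h]
              · exact absurd h.1 hvl
          _ < #(L v) := by simp only [card_singleton, hL, if_neg hv0, if_neg hvl]; exact hM v
  have hρ₀ : ρ 0 = c := by simpa [hL] using hρL 0 (by simp)
  refine ⟨ρ, fun k _ => ?_, fun u _ v _ huv => hρ u (by simp) v (by simp) huv⟩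
  have hk := hρL k (by simp)
  by_cases hk0 : k = 0
  · rwa [hk0, hρ₀]
  by_cases hkl : k = Fin.last _
  · have hadj0 : (cycleGraph (n + 2)).Adj k 0 := by
      rw [cycleGraph_adj, hkl]
      exact Or.inr (sub_eq_iff_eq_add'.2 (Fin.last_add_one _).symm)
    have hne : ρ k ≠ c := hρ₀ ▸ hρ k (by simp) 0 (by simp) hadj0
    simp only [hL, if_neg hk0, if_pos hkl, mem_insert] at hk
    exact hk.resolve_left hne
  · simpa [hL, hk0, hkl] using hk

theorem IsListColoringOn.cycleGraph_sub {n : ℕ} {M : Fin (n + 2) → Finset α} {r : Fin (n + 2)}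
    {ρ : Fin (n + 2) → α}
    (hρ : (cycleGraph (n + 2)).IsListColoringOn (fun k => M (k + r)) Set.univ ρ) :
    (cycleGraph (n + 2)).IsListColoringOn M Set.univ (fun k => ρ (k - r)) := by
  refine ⟨fun k _ => by simpa using hρ.1 (k - r) trivial, fun u _ v _ huv => ?_⟩
  refine hρ.2 _ trivial _ trivial ?_
  rw [cycleGraph_adj] at huv ⊢
  simpa using huv

theorem cycleGraph_exists_isListColoringOn_of_two_le_card [DecidableEq α] {n : ℕ}
    (hn : Even (n + 2)) {M : Fin (n + 2) → Finset α} (hM : ∀ i, 2 ≤ #(M i)) :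
    ∃ ρ, (cycleGraph (n + 2)).IsListColoringOn M Set.univ ρ := by
  by_cases hsub : ∀ i, M (i + 1) ⊆ M i
  · have h₀ : ∀ i, M 0 ⊆ M i := Fin.reverseInduction
      (by simpa using hsub (Fin.last _))
      (fun i hi => by rw [← Fin.coeSucc_eq_succ] at hi; exact hi.trans (hsub _))
    obtain ⟨a, ha, b, hb, hab⟩ := one_lt_card.1 (hM 0)
    exact cycleGraph_exists_isListColoringOn_of_mem hn hab (fun i => h₀ i ha) (fun i => h₀ i hb)
  · obtain ⟨i, hi⟩ := not_forall.1 hsub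
    obtain ⟨c, hc₀, hc⟩ := not_subset.1 hi
    have hlast : Fin.last (n + 1) + (i + 1) = i := by
      rw [add_comm i, ← add_assoc, Fin.last_add_one, zero_add]
    obtain ⟨ρ, hρ⟩ :=
      cycleGraph_exists_isListColoringOn_of_notMem (M := fun k => M (k + (i + 1))) (fun k => hM _)
        (by simpa using hc₀) (by simpa [hlast] using hc)
    exact ⟨_, hρ.cycleGraph_sub⟩

def IsDegreeChoosable (α : Type*) (G : SimpleGraph V) [Fintype V] [DecidableRel G.Adj] : Prop :=
  ∀ L : V → Finset α, (∀ v, G.degree v ≤ #(L v)) →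
    ∃ φ, G.IsListColoringOn L Set.univ φ

theorem isDegreeChoosable_cycleGraph [DecidableEq α] {m : ℕ} (hm : Even m) (h3 : 3 ≤ m) :
    IsDegreeChoosable α (cycleGraph m) := by
  obtain ⟨n, rfl⟩ : ∃ n, m = n + 3 := ⟨m - 3, by omega⟩
  intro M hM
  exact cycleGraph_exists_isListColoringOn_of_two_le_card (n := n + 1) hm fun i =>
    cycleGraph_degree_three_le ▸ hM i

section Embedding

variable {G : SimpleGraph V} {H : SimpleGraph W}

theorem isListColoringOn_univ_extend (f : H ↪g G) {L : V → Finset α} {φ : V → α}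
    (hφ : G.IsListColoringOn L (Set.range f)ᶜ φ) {ρ : W → α}
    (hρ : H.IsListColoringOn (fun w => L (f w)) Set.univ ρ)
    (hsep : ∀ w u, u ∉ Set.range f → G.Adj (f w) u → ρ w ≠ φ u) :
    G.IsListColoringOn L Set.univ (Function.extend f ρ φ) := by
  have hin : ∀ w, Function.extend f ρ φ (f w) = ρ w := f.injective.extend_apply ρ φ
  have hout : ∀ v ∉ Set.range f, Function.extend f ρ φ v = φ v :=
    fun v hv => Function.extend_apply' ρ φ v hv
  refine ⟨fun v _ => ?_, fun u _ v _ huv => ?_⟩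
  · by_cases hv : v ∈ Set.range f
    · obtain ⟨w, rfl⟩ := hv
      exact hin w ▸ hρ.1 w trivial
    · exact hout v hv ▸ hφ.1 v hv
  by_cases hu : u ∈ Set.range f <;> by_cases hv : v ∈ Set.range f
  · obtain ⟨w, rfl⟩ := hu
    obtain ⟨w', rfl⟩ := hv
    rw [hin, hin]
    exact hρ.2 w trivial w' trivial (f.map_adj_iff.1 huv)
  · obtain ⟨w, rfl⟩ := hu
    rw [hin, hout v hv]
    exact hsep w v hv huv
  · obtain ⟨w, rfl⟩ := hv
    rw [hin, hout u hu]
    exact (hsep w u hu huv.symm).symm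
  · rw [hout u hu, hout v hv]
    exact hφ.2 u hu v hv huv

variable [Fintype V] [DecidableRel G.Adj] [Fintype W] [DecidableRel H.Adj]

theorem degree_le_card_sdiff_image [DecidableEq α] (f : H ↪g G)
    [DecidablePred (· ∈ Set.range f)] (L : V → Finset α) (φ : V → α) (w : W)
    (hL : G.degree (f w) ≤ #(L (f w))) :
    H.degree w ≤ #(L (f w) \ {u ∈ G.neighborFinset (f w) | u ∉ Set.range f}.image φ) := by
  have hin : H.degree w ≤ #{u ∈ G.neighborFinset (f w) | u ∈ Set.range f} := calc
    H.degree w = #((H.neighborFinset w).map f.toEmbedding) := (card_map _).symm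
    _ ≤ _ := card_le_card fun u hu => by
      obtain ⟨w', hw', rfl⟩ := mem_map.1 hu
      simpa using (mem_neighborFinset _ _ _).1 hw'
  have hsplit := card_filter_add_card_filter_not (s := G.neighborFinset (f w))
    (· ∈ Set.range f)
  have himage := card_image_le (s := {u ∈ G.neighborFinset (f w) | u ∉ Set.range f}) (f := φ)
  have hsdiff := le_card_sdiff ({u ∈ G.neighborFinset (f w) | u ∉ Set.range f}.image φ) (L (f w))
  rw [card_neighborFinset_eq_degree] at hsplit
  omega

theorem IsDegreeChoosable.of_embedding [Nonempty W] [Nonempty α] (hG : G.Connected)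
    (f : H ↪g G) (hH : IsDegreeChoosable α H) : IsDegreeChoosable α G := by
  classical
  intro L hL
  obtain ⟨φ, hφ⟩ := hG.exists_isListColoringOn_of_notMem L (S := (Set.range f)ᶜ)
    (c := f (Classical.arbitrary W)) (by simp) fun v _ => hL v
  obtain ⟨ρ, hρL, hρ⟩ :=
    hH (fun w => L (f w) \ {u ∈ G.neighborFinset (f w) | u ∉ Set.range f}.image φ) fun w =>
      degree_le_card_sdiff_image f L φ w (hL _)
  refine ⟨_, isListColoringOn_univ_extend f hφ ⟨fun w hw => (mem_sdiff.1 (hρL w hw)).1, hρ⟩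
    fun w u hu hadj hρu => (mem_sdiff.1 (hρL w trivial)).2 ?_⟩
  exact mem_image.2 ⟨u, mem_filter.2 ⟨(mem_neighborFinset _ _ _).2 hadj, hu⟩, hρu.symm⟩

end Embedding

end SimpleGraph

theorem stmt7_general {V : Type*} [Fintype V] (G : SimpleGraph V)
    [DecidableRel G.Adj] (hconn : G.Connected)
    (L : V → Finset ℕ) (hL : ∀ v, (L v).card = G.degree v)
    (hcycle : ∃ m : ℕ, 4 ≤ m ∧ Even m ∧
      Nonempty (SimpleGraph.cycleGraph m ↪g G)) :
    ∃ φ : V → ℕ, (∀ v, φ v ∈ L v) ∧ ∀ u v, G.Adj u v → φ u ≠ φ v := by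
  obtain ⟨m, hm4, hmeven, ⟨f⟩⟩ := hcycle
  have : Nonempty (Fin m) := ⟨⟨0, by omega⟩⟩
  have hC := SimpleGraph.isDegreeChoosable_cycleGraph (α := ℕ) hmeven (by omega)
  obtain ⟨φ, hφL, hφ⟩ := hC.of_embedding hconn f L fun v => (hL v).ge
  exact ⟨φ, fun v => hφL v trivial, fun u v => hφ u trivial v trivial⟩

/-- Let `G` be a connected graph and `L` a list assignment with `|L(v)| = deg(v)` for every
vertex `v`. If `G` contains an induced even cycle, then `G` has a proper `L`-coloring. -/
theorem stmt7 {V : Type*} [Fintype V] [DecidableEq V] (G : SimpleGraph V)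
    [DecidableRel G.Adj] (hconn : G.Connected)
    (L : V → Finset ℕ) (hL : ∀ v, (L v).card = G.degree v)
    (hcycle : ∃ m : ℕ, 4 ≤ m ∧ Even m ∧
      Nonempty (SimpleGraph.cycleGraph m ↪g G)) :
    ∃ φ : V → ℕ, (∀ v, φ v ∈ L v) ∧ ∀ u v, G.Adj u v → φ u ≠ φ v :=
  stmt7_general G hconn L hL hcycle
end

section
/- If every nonempty induced subgraph of a graph G contains a vertex of degree at most 1 or two adjacent vertices of degree 2, and G has a 3-assignment L, then G has a proper L-coloring. In particular, every graph with maximum average degree less than 2.4 is 3-choosable. -/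
open Finset

lemma choose_color (L F : Finset ℕ) (hL : L.card = 3) (hF : F.card ≤ 2) :
    ∃ c ∈ L, c ∉ F := by
  have h : 0 < (L \ F).card := by
    have := Finset.le_card_sdiff F L
    omega
  obtain ⟨c, hc⟩ := Finset.card_pos.mp h
  exact ⟨c, (Finset.mem_sdiff.mp hc).1, (Finset.mem_sdiff.mp hc).2⟩

lemma part1 (V : Type) [Fintype V] (G : SimpleGraph V)
    (hyp : ∀ s : Set V, s.Nonempty →
        (∃ v ∈ s, (G.neighborSet v ∩ s).ncard ≤ 1) ∨
        (∃ u ∈ s, ∃ v ∈ s, G.Adj u v ∧ (G.neighborSet u ∩ s).ncard = 2 ∧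
          (G.neighborSet v ∩ s).ncard = 2))
    (L : V → Finset ℕ) (hL : ∀ v, (L v).card = 3) :
    ∃ φ : V → ℕ, (∀ v, φ v ∈ L v) ∧ ∀ u v, G.Adj u v → φ u ≠ φ v := by
  classical
  have hLne : ∀ v, (L v).Nonempty := fun v =>
    Finset.card_pos.mp (by rw [hL v]; norm_num)
  set N : V → Finset V → Finset V := fun v t => G.neighborFinset v ∩ t with hN
  have hmemN : ∀ (w v : V) (t : Finset V), w ∈ N v t ↔ G.Adj v w ∧ w ∈ t := by
    intro w v t
    simp [hN]
  have hNcard : ∀ (v : V) (t : Finset V),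
      (G.neighborSet v ∩ (↑t : Set V)).ncard = (N v t).card := by
    intro v t
    rw [← Set.ncard_coe_finset]
    congr 1
    simp [hN, Set.ext_iff]
  have key : ∀ (n : ℕ) (t : Finset V), t.card ≤ n →
      ∃ φ : V → ℕ, (∀ v, φ v ∈ L v) ∧
        ∀ u ∈ t, ∀ v ∈ t, G.Adj u v → φ u ≠ φ v := by
    intro n
    induction n with
    | zero =>
      intro t ht
      refine ⟨fun v => (hLne v).choose, fun v => (hLne v).choose_spec, ?_⟩
      intro u hu
      rw [Finset.card_eq_zero.mp (Nat.le_zero.mp ht)] at hu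
      simp at hu
    | succ n ih =>
      intro t ht
      rcases t.eq_empty_or_nonempty with rfl | htne
      · refine ⟨fun v => (hLne v).choose, fun v => (hLne v).choose_spec, ?_⟩
        simp
      rcases hyp ↑t (by exact_mod_cast htne.to_set) with ⟨v, hv, hdeg⟩ |
        ⟨u, hu, v, hv, huv, hdu, hdv⟩
      · -- case A
        rw [Finset.mem_coe] at hv
        rw [hNcard] at hdeg
        obtain ⟨φ, hφL, hφp⟩ := ih (t.erase v)
          (by rw [Finset.card_erase_of_mem hv]; omega)
        have hF : ((N v t).image φ).card ≤ 2 :=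
          le_trans (Finset.card_image_le) (by omega)
        obtain ⟨c, hcL, hcF⟩ := choose_color (L v) _ (hL v) hF
        refine ⟨Function.update φ v c, ?_, ?_⟩
        · intro w
          rcases eq_or_ne w v with rfl | hw
          · simpa using hcL
          · simpa [Function.update_of_ne hw] using hφL w
        · intro x hx y hy hxy
          have hne := G.ne_of_adj hxy
          by_cases hxv : x = v
          · rw [hxv] at hxy ⊢
            have hyv : y ≠ v := fun h => by rw [h] at hxy; exact G.irrefl hxy
            rw [Function.update_self, Function.update_of_ne hyv]
            intro h
            exact hcF (h ▸ Finset.mem_image_of_mem φ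
              ((hmemN y v t).mpr ⟨hxy, hy⟩))
          by_cases hyv : y = v
          · rw [hyv] at hxy ⊢
            rw [Function.update_of_ne hxv, Function.update_self]
            intro h
            have hm : φ x ∈ (N v t).image φ :=
              Finset.mem_image_of_mem φ ((hmemN x v t).mpr ⟨hxy.symm, hx⟩)
            exact hcF (h ▸ hm)
          · rw [Function.update_of_ne hxv, Function.update_of_ne hyv]
            exact hφp x (Finset.mem_erase.mpr ⟨hxv, hx⟩)
              y (Finset.mem_erase.mpr ⟨hyv, hy⟩) hxy
      · -- case B
        rw [Finset.mem_coe] at hu hv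
        rw [hNcard] at hdu hdv
        have huvne : u ≠ v := G.ne_of_adj huv
        obtain ⟨φ, hφL, hφp⟩ := ih ((t.erase u).erase v) (by
          have h1 := Finset.card_erase_of_mem hu
          have h2 := Finset.card_erase_of_mem
            (Finset.mem_erase.mpr ⟨huvne.symm, hv⟩)
          omega)
        have hvNu : v ∈ N u t := (hmemN v u t).mpr ⟨huv, hv⟩
        have huNv : u ∈ N v t := (hmemN u v t).mpr ⟨huv.symm, hu⟩
        have hFu : (((N u t).erase v).image φ).card ≤ 2 := by
          have := Finset.card_erase_of_mem hvNu
          exact le_trans Finset.card_image_le (by omega)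
        obtain ⟨cu, hcuL, hcuF⟩ := choose_color (L u) _ (hL u) hFu
        have hFv : ((((N v t).erase u).image φ) ∪ {cu}).card ≤ 2 := by
          have h1 := Finset.card_erase_of_mem huNv
          have h2 : (((N v t).erase u).image φ).card ≤ 1 :=
            le_trans Finset.card_image_le (by omega)
          calc ((((N v t).erase u).image φ) ∪ {cu}).card
              ≤ (((N v t).erase u).image φ).card + ({cu} : Finset ℕ).card :=
                Finset.card_union_le _ _
            _ ≤ 2 := by simp; omega
        obtain ⟨cv, hcvL, hcvF⟩ := choose_color (L v) _ (hL v) hFv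
        set φ' := Function.update (Function.update φ u cu) v cv with hφ'
        have hφ'u : φ' u = cu := by
          rw [hφ', Function.update_of_ne huvne, Function.update_self]
        have hφ'v : φ' v = cv := by rw [hφ', Function.update_self]
        have hφ'w : ∀ w, w ≠ u → w ≠ v → φ' w = φ w := by
          intro w h1 h2
          rw [hφ', Function.update_of_ne h2, Function.update_of_ne h1]
        have hcune : ∀ w ∈ (N u t).erase v, cu ≠ φ w := by
          intro w hw h
          exact hcuF (h ▸ Finset.mem_image_of_mem φ hw)
        have hcvne : ∀ w ∈ (N v t).erase u, cv ≠ φ w := by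
          intro w hw h
          exact hcvF (Finset.mem_union_left _ (h ▸ Finset.mem_image_of_mem φ hw))
        have hcvcu : cv ≠ cu := fun h =>
          hcvF (Finset.mem_union_right _ (by simp [h]))
        refine ⟨φ', ?_, ?_⟩
        · intro w
          rcases eq_or_ne w v with rfl | h2
          · rw [hφ'v]; exact hcvL
          rcases eq_or_ne w u with rfl | h1
          · rw [hφ'u]; exact hcuL
          · rw [hφ'w w h1 h2]; exact hφL w
        · intro x hx y hy hxy
          have hne := G.ne_of_adj hxy
          by_cases hxu : x = u
          · rw [hxu] at hxy ⊢
            by_cases hyv : y = v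
            · rw [hyv, hφ'u, hφ'v]; exact hcvcu.symm
            · have hyu : y ≠ u := fun h => by rw [h] at hxy; exact G.irrefl hxy
              rw [hφ'u, hφ'w y hyu hyv]
              exact hcune y (Finset.mem_erase.mpr ⟨hyv, (hmemN y u t).mpr ⟨hxy, hy⟩⟩)
          by_cases hxv : x = v
          · rw [hxv] at hxy ⊢
            by_cases hyu : y = u
            · rw [hyu, hφ'v, hφ'u]; exact hcvcu
            · have hyv : y ≠ v := fun h => by rw [h] at hxy; exact G.irrefl hxy
              rw [hφ'v, hφ'w y hyu hyv]
              exact hcvne y (Finset.mem_erase.mpr ⟨hyu, (hmemN y v t).mpr ⟨hxy, hy⟩⟩)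
          by_cases hyu : y = u
          · rw [hyu] at hxy ⊢
            rw [hφ'w x hxu hxv, hφ'u]
            exact fun h => hcune x
              (Finset.mem_erase.mpr ⟨hxv, (hmemN x u t).mpr ⟨hxy.symm, hx⟩⟩) h.symm
          by_cases hyv : y = v
          · rw [hyv] at hxy ⊢
            rw [hφ'w x hxu hxv, hφ'v]
            exact fun h => hcvne x
              (Finset.mem_erase.mpr ⟨hxu, (hmemN x v t).mpr ⟨hxy.symm, hx⟩⟩) h.symm
          · rw [hφ'w x hxu hxv, hφ'w y hyu hyv]
            exact hφp x (by simp [hx, hxu, hxv]) y (by simp [hy, hyu, hyv]) hxy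
  obtain ⟨φ, h1, h2⟩ := key (Finset.univ.card) Finset.univ le_rfl
  exact ⟨φ, h1, fun u v h => h2 u (Finset.mem_univ u) v (Finset.mem_univ v) h⟩

lemma part2hyp (V : Type) [Fintype V] (G : SimpleGraph V)
    (hmad : ∀ H : G.Subgraph, H.verts.Nonempty →
      (2 * H.edgeSet.ncard : ℚ) < (12 / 5 : ℚ) * H.verts.ncard) :
    ∀ s : Set V, s.Nonempty →
        (∃ v ∈ s, (G.neighborSet v ∩ s).ncard ≤ 1) ∨
        (∃ u ∈ s, ∃ v ∈ s, G.Adj u v ∧ (G.neighborSet u ∩ s).ncard = 2 ∧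
          (G.neighborSet v ∩ s).ncard = 2) := by
  classical
  intro s hsne
  by_contra hcon
  push_neg at hcon
  obtain ⟨h1, h2⟩ := hcon
  set t : Finset V := s.toFinset with htdef
  have hts : ∀ x, x ∈ t ↔ x ∈ s := fun x => Set.mem_toFinset
  set N : V → Finset V := fun v => G.neighborFinset v ∩ t with hN
  have hmemN : ∀ w v : V, w ∈ N v ↔ G.Adj v w ∧ w ∈ t := by
    intro w v; simp [hN]
  have hNcard : ∀ v : V, (G.neighborSet v ∩ s).ncard = (N v).card := by
    intro v
    rw [← Set.ncard_coe_finset]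
    congr 1
    ext x
    simp [hN, hts x]
  set d : V → ℕ := fun v => (N v).card with hd
  -- degrees at least 2
  have hd2 : ∀ v ∈ t, 2 ≤ d v := by
    intro v hv
    have h := h1 v ((hts v).mp hv)
    rw [hNcard] at h
    show 2 ≤ (N v).card
    omega
  -- no two adjacent vertices of degree 2
  have hadj2 : ∀ u ∈ t, ∀ v ∈ t, G.Adj u v → d u = 2 → d v ≠ 2 := by
    intro u hu v hv huv hdu hdv
    have := h2 u ((hts u).mp hu) v ((hts v).mp hv) huv
    rw [hNcard, hNcard] at this
    exact this hdu hdv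
  set A : Finset V := t.filter (fun v => d v = 2) with hA
  set B : Finset V := t.filter (fun v => ¬ d v = 2) with hB
  -- each degree-2 vertex has all neighbors in B
  have hNA : ∀ v ∈ A, N v ⊆ B := by
    intro v hv w hw
    rw [hA, Finset.mem_filter] at hv
    rw [hmemN] at hw
    rw [hB, Finset.mem_filter]
    exact ⟨hw.2, hadj2 v hv.1 w hw.2 hw.1 hv.2⟩
  have hd3 : ∀ u ∈ B, 3 ≤ d u := by
    intro u hu
    rw [hB, Finset.mem_filter] at hu
    have := hd2 u hu.1
    omega
  -- double counting
  have hdc : ∑ u ∈ B, (N u ∩ A).card = ∑ v ∈ A, (N v ∩ B).card := by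
    have e1 : ∀ u ∈ B, (N u ∩ A).card = ∑ v ∈ A, if G.Adj u v then 1 else 0 := by
      intro u hu
      rw [Finset.inter_comm, ← Finset.filter_mem_eq_inter, Finset.card_filter]
      refine Finset.sum_congr rfl ?_
      intro v hv
      rw [hA, Finset.mem_filter] at hv
      congr 1
      rw [hmemN]
      simp [hv.1]
    have e2 : ∀ v ∈ A, (N v ∩ B).card = ∑ u ∈ B, if G.Adj u v then 1 else 0 := by
      intro v hv
      rw [Finset.inter_comm, ← Finset.filter_mem_eq_inter, Finset.card_filter]
      refine Finset.sum_congr rfl ?_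
      intro u hu
      rw [hB, Finset.mem_filter] at hu
      congr 1
      rw [hmemN]
      exact propext ⟨fun h => h.1.symm, fun h => ⟨h.symm, hu.1⟩⟩
    rw [Finset.sum_congr rfl e1, Finset.sum_congr rfl e2, Finset.sum_comm]
  have hAdeg : ∀ v ∈ A, (N v ∩ B).card = 2 := by
    intro v hv
    rw [Finset.inter_eq_left.mpr (hNA v hv)]
    rw [hA, Finset.mem_filter] at hv
    exact hv.2
  have hsumA : ∑ v ∈ A, (N v ∩ B).card = 2 * A.card := by
    calc ∑ v ∈ A, (N v ∩ B).card = ∑ _v ∈ A, 2 := Finset.sum_congr rfl hAdeg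
      _ = 2 * A.card := by rw [Finset.sum_const, smul_eq_mul, mul_comm]
  have hperB : ∀ u ∈ B, (N u ∩ A).card + 12 ≤ 5 * d u := by
    intro u hu
    have h3 := hd3 u hu
    have hle : (N u ∩ A).card ≤ d u :=
      Finset.card_le_card (Finset.inter_subset_left)
    omega
  -- main counting inequality
  have hmain : 12 * t.card ≤ 5 * ∑ v ∈ t, d v := by
    have hsplit : ∑ v ∈ t, d v = ∑ v ∈ A, d v + ∑ v ∈ B, d v :=
      (Finset.sum_filter_add_sum_filter_not t _ d).symm
    have hcards : A.card + B.card = t.card :=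
      Finset.card_filter_add_card_filter_not _
    have hsA : ∑ v ∈ A, d v = 2 * A.card := by
      have h2' : ∀ v ∈ A, d v = 2 := by
        intro v hv
        rw [hA, Finset.mem_filter] at hv
        exact hv.2
      calc ∑ v ∈ A, d v = ∑ _v ∈ A, 2 := Finset.sum_congr rfl h2'
        _ = 2 * A.card := by rw [Finset.sum_const, smul_eq_mul, mul_comm]
    have hsB : 2 * A.card + 12 * B.card ≤ 5 * ∑ v ∈ B, d v := by
      calc 2 * A.card + 12 * B.card
          = ∑ v ∈ A, (N v ∩ B).card + 12 * B.card := by rw [hsumA]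
        _ = ∑ u ∈ B, (N u ∩ A).card + 12 * B.card := by rw [hdc]
        _ = ∑ u ∈ B, ((N u ∩ A).card + 12) := by
            rw [Finset.sum_add_distrib, Finset.sum_const, smul_eq_mul, mul_comm]
        _ ≤ ∑ u ∈ B, 5 * d u := Finset.sum_le_sum hperB
        _ = 5 * ∑ u ∈ B, d u := (Finset.mul_sum _ _ _).symm
    omega
  -- handshake for the induced subgraph
  set H : G.Subgraph := SimpleGraph.Subgraph.induce ⊤ s with hH
  have hHverts : H.verts = s := rfl
  haveI hvfin : Fintype ↥s := Set.Finite.fintype (Set.toFinite s)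
  have hdegcoe : ∀ x : ↥s, (H.coe.neighborSet x).ncard = d ↑x := by
    intro x
    have himg : (Subtype.val '' (H.coe.neighborSet x)) = G.neighborSet ↑x ∩ s := by
      ext w
      simp only [Set.mem_image, SimpleGraph.mem_neighborSet, Set.mem_inter_iff]
      constructor
      · rintro ⟨y, hy, rfl⟩
        exact ⟨hy.2.2, y.2⟩
      · rintro ⟨hadj, hw⟩
        exact ⟨⟨w, hw⟩, ⟨x.2, hw, hadj⟩, rfl⟩
    have := Set.ncard_image_of_injective (H.coe.neighborSet x) Subtype.val_injective
    rw [himg] at this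
    rw [← this, hNcard]
  have hsum : ∑ v ∈ t, d v = 2 * H.coe.edgeFinset.card := by
    rw [Finset.sum_subtype t hts d]
    rw [← SimpleGraph.sum_degrees_eq_twice_card_edges]
    refine Finset.sum_congr rfl (fun x _ => ?_)
    rw [← hdegcoe x, ← Nat.card_coe_set_eq]
    exact (@Nat.card_eq_fintype_card _ (H.coe.neighborSetFintype x)).trans
      (@SimpleGraph.card_neighborSet_eq_degree _ H.coe x (H.coe.neighborSetFintype x))
  have hedge : H.edgeSet.ncard = H.coe.edgeFinset.card := by
    rw [← SimpleGraph.Subgraph.image_coe_edgeSet_coe H,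
      Set.ncard_image_of_injective _ (Sym2.map.injective Subtype.val_injective),
      ← Nat.card_coe_set_eq, Nat.card_eq_fintype_card,
      SimpleGraph.edgeFinset_card]
  have hvcard : H.verts.ncard = t.card := by
    have hct : (↑t : Set V) = s := by ext x; simp [hts x]
    rw [hHverts, ← hct, Set.ncard_coe_finset]
  have hfin := hmad H (by rw [hHverts]; exact hsne)
  have heq : 2 * H.edgeSet.ncard = ∑ v ∈ t, d v := by rw [hedge, hsum]
  rw [hvcard] at hfin
  have hfin' : ((2 * H.edgeSet.ncard : ℕ) : ℚ) < (12 / 5 : ℚ) * t.card := by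
    push_cast
    exact hfin
  rw [heq] at hfin'
  have hmain' : ((12 * t.card : ℕ) : ℚ) ≤ ((5 * ∑ v ∈ t, d v : ℕ) : ℚ) := by
    exact_mod_cast hmain
  push_cast at hfin' hmain'
  linarith

/-- (1) If every nonempty induced subgraph of `G` contains a vertex of degree at most `1`
or two adjacent vertices of degree `2` (degrees taken in the induced subgraph), then `G`
is `3`-choosable: every `3`-assignment `L` admits a proper `L`-coloring.
(2) In particular, every graph with maximum average degree less than `2.4` is
`3`-choosable. -/
theorem stmt10 :
    (∀ (V : Type) [Fintype V] (G : SimpleGraph V),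
      (∀ s : Set V, s.Nonempty →
        (∃ v ∈ s, (G.neighborSet v ∩ s).ncard ≤ 1) ∨
        (∃ u ∈ s, ∃ v ∈ s, G.Adj u v ∧ (G.neighborSet u ∩ s).ncard = 2 ∧
          (G.neighborSet v ∩ s).ncard = 2)) →
      ∀ L : V → Finset ℕ, (∀ v, (L v).card = 3) →
        ∃ φ : V → ℕ, (∀ v, φ v ∈ L v) ∧ ∀ u v, G.Adj u v → φ u ≠ φ v) ∧
    (∀ (V : Type) [Fintype V] (G : SimpleGraph V),
      (∀ H : G.Subgraph, H.verts.Nonempty →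
        (2 * H.edgeSet.ncard : ℚ) < (12 / 5 : ℚ) * H.verts.ncard) →
      ∀ L : V → Finset ℕ, (∀ v, (L v).card = 3) →
        ∃ φ : V → ℕ, (∀ v, φ v ∈ L v) ∧ ∀ u v, G.Adj u v → φ u ≠ φ v) := by
  constructor
  · intro V _ G hyp L hL
    exact part1 V G hyp L hL
  · intro V _ G hmad L hL
    exact part1 V G (part2hyp V G hmad) L hL
end
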